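/- arXiv:2202.02422 — 4 statements merged into one kernel-verified Lean document; each statement's English description precedes it below -/
import Mathlib

section
/- Let ψ : Λ_x → ℝ^q be continuous on the compact set Λ_x ⊂ ℝ^p, and let x, y be functions ℝ → ℝ^p, ℝ → ℝ^q with x(t) ∈ Λ_x for all t, such that ‖y(t) − ψ(x(t))‖ → 0 as t → ∞. Suppose there is a sequence μₙ → ∞ with ‖x(t+μₙ) − x(t)‖ → 0 as n → ∞ uniformly on compact subsets of ℝ. Then for every compact set 𝒞 ⊆ ℝ and every ε > 0 there exist T > 0 and N ∈ ℕ such that ‖y(t+T+μₙ) − y(t+T)‖ < ε for all t ∈ 𝒞 and n ≥ N. Consequently, the shifted function ỹ(t) = y(t+T) satisfies ‖ỹ(t+μₙ) − ỹ(t)‖ → 0 uniformly on compact subsets of ℝ (for an appropriate choice of T depending on the compact set, or using a diagonal argument). -/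
open Set Filter

theorem response_uniform_convergence (p q : ℕ)
    (Λx : Set (EuclideanSpace ℝ (Fin p))) (hΛx : IsCompact Λx)
    (ψ : EuclideanSpace ℝ (Fin p) → EuclideanSpace ℝ (Fin q))
    (hψ : ContinuousOn ψ Λx)
    (x : ℝ → EuclideanSpace ℝ (Fin p)) (y : ℝ → EuclideanSpace ℝ (Fin q))
    (hxmem : ∀ t, x t ∈ Λx)
    (hsync : Tendsto (fun t => ‖y t - ψ (x t)‖) atTop (nhds 0))
    (μ : ℕ → ℝ) (hμpos : ∀ n, 0 < μ n) (hμ : Tendsto μ atTop atTop)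
    (hconv : ∀ C : Set ℝ, IsCompact C → ∀ ε > 0, ∃ N, ∀ n ≥ N, ∀ t ∈ C,
      ‖x (t + μ n) - x t‖ < ε) :
    ∀ C : Set ℝ, IsCompact C → ∀ ε > 0, ∃ T > 0, ∃ N, ∀ t ∈ C, ∀ n ≥ N,
      ‖y (t + T + μ n) - y (t + T)‖ < ε := by
  intro C hC ε hε
  -- uniform continuity of ψ on Λx
  have hUC : UniformContinuousOn ψ Λx := hΛx.uniformContinuousOn_of_continuous hψ
  rw [Metric.uniformContinuousOn_iff] at hUC
  obtain ⟨δ, hδpos, hδ⟩ := hUC (ε / 3) (by positivity)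
  -- sync: eventually small
  have hev : ∀ᶠ t in atTop, ‖y t - ψ (x t)‖ < ε / 3 :=
    hsync.eventually (gt_mem_nhds (by positivity))
  obtain ⟨M, hM⟩ := eventually_atTop.1 hev
  -- bound C
  obtain ⟨r, hr⟩ := hC.isBounded.subset_closedBall 0
  set T : ℝ := |M| + r + |r| + 1 with hT
  have hTpos : 0 < T := by
    have := abs_nonneg M
    have h2 := abs_nonneg r
    have h3 : -|r| ≤ r := neg_abs_le r
    nlinarith
  -- compact shifted set
  have hC' : IsCompact ((fun t => t + T) '' C) :=
    hC.image (continuous_id.add continuous_const)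
  obtain ⟨N, hN⟩ := hconv _ hC' δ hδpos
  refine ⟨T, hTpos, N, fun t ht n hn => ?_⟩
  have htr : |t| ≤ r := by
    have := hr ht
    simpa [Metric.mem_closedBall, Real.dist_eq] using this
  have ht1 : M ≤ t + T := by
    have h1 : -|t| ≤ t := neg_abs_le t
    have h2 : M ≤ |M| := le_abs_self M
    nlinarith [abs_nonneg r]
  have ht2 : M ≤ t + T + μ n := by linarith [(hμpos n).le]
  have hx' : ‖x (t + T + μ n) - x (t + T)‖ < δ :=
    hN n hn (t + T) ⟨t, ht, rfl⟩
  have hψclose : dist (ψ (x (t + T + μ n))) (ψ (x (t + T))) < ε / 3 := by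
    apply hδ _ (hxmem _) _ (hxmem _)
    rwa [dist_eq_norm]
  have hy1 := hM _ ht2
  have hy2 := hM _ ht1
  have key : y (t + T + μ n) - y (t + T) =
      (y (t + T + μ n) - ψ (x (t + T + μ n)))
      + (ψ (x (t + T + μ n)) - ψ (x (t + T)))
      - (y (t + T) - ψ (x (t + T))) := by abel
  calc ‖y (t + T + μ n) - y (t + T)‖
      ≤ ‖y (t + T + μ n) - ψ (x (t + T + μ n))‖
        + ‖ψ (x (t + T + μ n)) - ψ (x (t + T))‖
        + ‖y (t + T) - ψ (x (t + T))‖ := by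
        rw [key]; exact norm_sub_le_of_le (norm_add_le _ _) le_rfl
    _ < ε / 3 + ε / 3 + ε / 3 := by
        have : ‖ψ (x (t + T + μ n)) - ψ (x (t + T))‖ < ε / 3 := by
          rwa [← dist_eq_norm]
        linarith
    _ = ε := by ring
end

section
/- Under the hypotheses of the main theorem (assumptions (A1), (A2), unpredictable drive solution x(t) with constants ε₀, r and sequences μₙ, νₙ, and generalized synchronization), if the response solution ỹ(t) = y(t+T) is unpredictable with constant ε₁ on intervals [θₙ−r₁, θₙ+r₁] ⊆ [νₙ−T−r, νₙ−T+r], then the combined solution z(t) = (x(t+T), y(t+T)) of the coupled system satisfies: ‖z(t+μₙ) − z(t)‖ → 0 uniformly on compact subsets of ℝ and ‖z(t+μₙ) − z(t)‖ ≥ √(ε₀² + ε₁²) for all t ∈ [θₙ−r₁, θₙ+r₁] and all n; hence z is an unpredictable function. -/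
open Set Filter

/-! In the `L²` product norm `‖(u, v)‖² = ‖u‖² + ‖v‖²`, so `‖(u, v)‖ ≤ ‖u‖ + ‖v‖` and the shifts
`z (t + μₙ) - z t` become small on compacts as soon as those of both components do, while on
`[θₙ - r₁, θₙ + r₁]`, which lies in the window where `x` separates, the separations `ε₀` and `ε₁` of
the two components add in quadrature. So `z` is unpredictable with the sequences `μ`, `θ`. -/

def Unpredictable {E : Type*} [NormedAddCommGroup E] (h : ℝ → E) : Prop :=
  UniformContinuous h ∧
  ∃ ε₀ > (0 : ℝ), ∃ r > (0 : ℝ), ∃ μ ν : ℕ → ℝ,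
    Tendsto μ atTop atTop ∧ Tendsto ν atTop atTop ∧
    (∀ C : Set ℝ, IsCompact C → ∀ ε > 0, ∃ N, ∀ n ≥ N, ∀ t ∈ C,
      ‖h (t + μ n) - h t‖ < ε) ∧
    ∀ n, ∀ t ∈ Icc (ν n - r) (ν n + r), ε₀ ≤ ‖h (t + μ n) - h t‖

variable {E F : Type*} [SeminormedAddCommGroup E] [SeminormedAddCommGroup F]

namespace WithLp

lemma prod_norm_toLp_le_add (p : ENNReal) [Fact (1 ≤ p)] (u : E) (v : F) :
    ‖toLp p (u, v)‖ ≤ ‖u‖ + ‖v‖ :=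
  calc ‖toLp p (u, v)‖ = ‖toLp p (u, (0 : F)) + toLp p ((0 : E), v)‖ := by
        rw [← toLp_add, Prod.mk_add_mk, add_zero, zero_add]
    _ ≤ ‖toLp p (u, (0 : F))‖ + ‖toLp p ((0 : E), v)‖ := norm_add_le _ _
    _ = ‖u‖ + ‖v‖ := by rw [norm_toLp_fst, norm_toLp_snd]

lemma sqrt_sq_add_sq_le_prod_norm_toLp {a b : ℝ} {u : E} {v : F} (ha : 0 ≤ a) (hb : 0 ≤ b)
    (hu : a ≤ ‖u‖) (hv : b ≤ ‖v‖) : √(a ^ 2 + b ^ 2) ≤ ‖toLp 2 (u, v)‖ := by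
  rw [Real.sqrt_le_left (norm_nonneg _), prod_norm_sq_eq_of_L2]
  exact add_le_add (pow_le_pow_left₀ ha hu 2) (pow_le_pow_left₀ hb hv 2)

end WithLp

def ShiftConvergesOnCompacts (h : ℝ → E) (μ : ℕ → ℝ) : Prop :=
  ∀ C : Set ℝ, IsCompact C → ∀ ε > 0, ∃ N, ∀ n ≥ N, ∀ t ∈ C, ‖h (t + μ n) - h t‖ < ε

lemma ShiftConvergesOnCompacts.toLp_prod {f : ℝ → E} {g : ℝ → F} {μ : ℕ → ℝ}
    (p : ENNReal) [Fact (1 ≤ p)]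
    (hf : ShiftConvergesOnCompacts f μ) (hg : ShiftConvergesOnCompacts g μ) :
    ShiftConvergesOnCompacts (fun t ↦ WithLp.toLp p (f t, g t)) μ := by
  intro C hC ε hε
  obtain ⟨N₁, hN₁⟩ := hf C hC (ε / 2) (half_pos hε)
  obtain ⟨N₂, hN₂⟩ := hg C hC (ε / 2) (half_pos hε)
  refine ⟨max N₁ N₂, fun n hn t ht ↦ ?_⟩
  calc ‖WithLp.toLp p (f (t + μ n), g (t + μ n)) - WithLp.toLp p (f t, g t)‖
      = ‖WithLp.toLp p (f (t + μ n) - f t, g (t + μ n) - g t)‖ := rfl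
    _ ≤ ‖f (t + μ n) - f t‖ + ‖g (t + μ n) - g t‖ := WithLp.prod_norm_toLp_le_add p _ _
    _ < ε / 2 + ε / 2 :=
        add_lt_add (hN₁ n (le_of_max_le_left hn) t ht) (hN₂ n (le_of_max_le_right hn) t ht)
    _ = ε := add_halves ε

theorem combined_solution_unpredictable_general (p q : ℕ)
    (x : ℝ → EuclideanSpace ℝ (Fin p)) (y : ℝ → EuclideanSpace ℝ (Fin q))
    (T : ℝ)
    (ε₀ ε₁ r r₁ : ℝ) (hε₀ : 0 < ε₀) (hε₁ : 0 < ε₁) (hr₁ : 0 < r₁)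
    (μ ν θ : ℕ → ℝ)
    (hμ : Tendsto μ atTop atTop)
    (hθ : Tendsto θ atTop atTop)
    (hxuc : UniformContinuous x) (hyuc : UniformContinuous y)
    (hxconv : ∀ C : Set ℝ, IsCompact C → ∀ ε > 0, ∃ N, ∀ n ≥ N, ∀ t ∈ C,
      ‖x (t + T + μ n) - x (t + T)‖ < ε)
    (hyconv : ∀ C : Set ℝ, IsCompact C → ∀ ε > 0, ∃ N, ∀ n ≥ N, ∀ t ∈ C,
      ‖y (t + T + μ n) - y (t + T)‖ < ε)
    (hxsep : ∀ n, ∀ t ∈ Icc (ν n - T - r) (ν n - T + r),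
      ε₀ ≤ ‖x (t + T + μ n) - x (t + T)‖)
    (hysep : ∀ n, ∀ t ∈ Icc (θ n - r₁) (θ n + r₁),
      ε₁ ≤ ‖y (t + T + μ n) - y (t + T)‖)
    (hsub : ∀ n, Icc (θ n - r₁) (θ n + r₁) ⊆ Icc (ν n - T - r) (ν n - T + r))
    (z : ℝ → WithLp 2 (EuclideanSpace ℝ (Fin p) × EuclideanSpace ℝ (Fin q)))
    (hz : ∀ t, z t = (WithLp.equiv 2 _).symm (x (t + T), y (t + T))) :
    (∀ C : Set ℝ, IsCompact C → ∀ ε > 0, ∃ N, ∀ n ≥ N, ∀ t ∈ C,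
      ‖z (t + μ n) - z t‖ < ε) ∧
    (∀ n, ∀ t ∈ Icc (θ n - r₁) (θ n + r₁),
      Real.sqrt (ε₀ ^ 2 + ε₁ ^ 2) ≤ ‖z (t + μ n) - z t‖) ∧
    Unpredictable z := by
  have hz' : z = fun t ↦ WithLp.toLp 2 (x (t + T), y (t + T)) := funext hz
  have hx : ShiftConvergesOnCompacts (fun t ↦ x (t + T)) μ := by
    simpa only [ShiftConvergesOnCompacts, add_right_comm _ (μ _) T] using hxconv
  have hy : ShiftConvergesOnCompacts (fun t ↦ y (t + T)) μ := by
    simpa only [ShiftConvergesOnCompacts, add_right_comm _ (μ _) T] using hyconv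
  have hconv : ShiftConvergesOnCompacts z μ := hz' ▸ hx.toLp_prod 2 hy
  have hsep : ∀ n, ∀ t ∈ Icc (θ n - r₁) (θ n + r₁),
      √(ε₀ ^ 2 + ε₁ ^ 2) ≤ ‖z (t + μ n) - z t‖ := by
    intro n t ht
    rw [hz, hz, add_right_comm t (μ n) T]
    exact WithLp.sqrt_sq_add_sq_le_prod_norm_toLp hε₀.le hε₁.le (hxsep n t (hsub n ht))
      (hysep n t ht)
  have huc : UniformContinuous z := hz' ▸ (WithLp.prod_uniformContinuous_toLp 2 _ _).comp
    ((hxuc.comp (uniformContinuous_add_right T)).prodMk (hyuc.comp (uniformContinuous_add_right T)))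
  have hpos : 0 < √(ε₀ ^ 2 + ε₁ ^ 2) := by positivity
  exact ⟨hconv, hsep, huc, _, hpos, r₁, hr₁, μ, θ, hμ, hθ, hconv, hsep⟩

theorem combined_solution_unpredictable (p q : ℕ)
    (x : ℝ → EuclideanSpace ℝ (Fin p)) (y : ℝ → EuclideanSpace ℝ (Fin q))
    (T : ℝ)
    (ε₀ ε₁ r r₁ : ℝ) (hε₀ : 0 < ε₀) (hε₁ : 0 < ε₁) (hr : 0 < r) (hr₁ : 0 < r₁)
    (μ ν θ : ℕ → ℝ)
    (hμ : Tendsto μ atTop atTop) (hν : Tendsto ν atTop atTop)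
    (hθ : Tendsto θ atTop atTop)
    (hxuc : UniformContinuous x) (hyuc : UniformContinuous y)
    (hxconv : ∀ C : Set ℝ, IsCompact C → ∀ ε > 0, ∃ N, ∀ n ≥ N, ∀ t ∈ C,
      ‖x (t + T + μ n) - x (t + T)‖ < ε)
    (hyconv : ∀ C : Set ℝ, IsCompact C → ∀ ε > 0, ∃ N, ∀ n ≥ N, ∀ t ∈ C,
      ‖y (t + T + μ n) - y (t + T)‖ < ε)
    (hxsep : ∀ n, ∀ t ∈ Icc (ν n - T - r) (ν n - T + r),
      ε₀ ≤ ‖x (t + T + μ n) - x (t + T)‖)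
    (hysep : ∀ n, ∀ t ∈ Icc (θ n - r₁) (θ n + r₁),
      ε₁ ≤ ‖y (t + T + μ n) - y (t + T)‖)
    (hsub : ∀ n, Icc (θ n - r₁) (θ n + r₁) ⊆ Icc (ν n - T - r) (ν n - T + r))
    (z : ℝ → WithLp 2 (EuclideanSpace ℝ (Fin p) × EuclideanSpace ℝ (Fin q)))
    (hz : ∀ t, z t = (WithLp.equiv 2 _).symm (x (t + T), y (t + T))) :
    (∀ C : Set ℝ, IsCompact C → ∀ ε > 0, ∃ N, ∀ n ≥ N, ∀ t ∈ C,
      ‖z (t + μ n) - z t‖ < ε) ∧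
    (∀ n, ∀ t ∈ Icc (θ n - r₁) (θ n + r₁),
      Real.sqrt (ε₀ ^ 2 + ε₁ ^ 2) ≤ ‖z (t + μ n) - z t‖) ∧
    Unpredictable z :=
  combined_solution_unpredictable_general p q x y T ε₀ ε₁ r r₁ hε₀ hε₁ hr₁ μ ν θ hμ hθ hxuc hyuc
    hxconv hyconv hxsep hysep hsub z hz
end

section
/- If h₁ : ℝ → Λ₁ and h₂ : ℝ → Λ₂ are uniformly continuous with Λ₁, Λ₂ compact, ‖h₁(t+μₙ) − h₁(t)‖ → 0 and ‖h₂(t+μₙ) − h₂(t)‖ → 0 uniformly on compact subsets of ℝ (with the same sequence μₙ → ∞), and there exist ε₀, ε₁ > 0, r₁ > 0 and a common sequence θₙ → ∞ with ‖h₁(t+μₙ) − h₁(t)‖ ≥ ε₀ and ‖h₂(t+μₙ) − h₂(t)‖ ≥ ε₁ for all t ∈ [θₙ−r₁, θₙ+r₁], then the pair function h(t) = (h₁(t), h₂(t)) is unpredictable with unpredictability constant √(ε₀² + ε₁²). -/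
open Set Filter

def ShiftsTendstoUniformlyOnCompacts {E : Type*} [SeminormedAddCommGroup E] (h : ℝ → E)
    (μ : ℕ → ℝ) : Prop :=
  ∀ C : Set ℝ, IsCompact C → ∀ ε > 0, ∃ N, ∀ n ≥ N, ∀ t ∈ C, ‖h (t + μ n) - h t‖ < ε

section Pair

variable {E F : Type*} [SeminormedAddCommGroup E] [SeminormedAddCommGroup F]

theorem WithLp.prod_norm_le_norm_fst_add_norm_snd (x : WithLp 2 (E × F)) :
    ‖x‖ ≤ ‖x.fst‖ + ‖x.snd‖ := by
  rw [WithLp.prod_norm_eq_of_L2]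
  exact Real.sqrt_le_iff.2 ⟨by positivity, by nlinarith [norm_nonneg x.fst, norm_nonneg x.snd]⟩

theorem WithLp.prod_norm_toLp_sub_toLp (a c : E) (b d : F) :
    ‖WithLp.toLp 2 (a, b) - WithLp.toLp 2 (c, d)‖ = √(‖a - c‖ ^ 2 + ‖b - d‖ ^ 2) := by
  rw [← WithLp.toLp_sub, Prod.mk_sub_mk, WithLp.prod_norm_eq_of_L2]
  rfl

theorem WithLp.sqrt_sq_add_sq_le_prod_norm_toLp_sub_toLp {a c : E} {b d : F} {ε₀ ε₁ : ℝ}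
    (hε₀ : 0 ≤ ε₀) (hε₁ : 0 ≤ ε₁) (hac : ε₀ ≤ ‖a - c‖) (hbd : ε₁ ≤ ‖b - d‖) :
    √(ε₀ ^ 2 + ε₁ ^ 2) ≤ ‖WithLp.toLp 2 (a, b) - WithLp.toLp 2 (c, d)‖ := by
  rw [WithLp.prod_norm_toLp_sub_toLp]
  gcongr

theorem ShiftsTendstoUniformlyOnCompacts.prod {h₁ : ℝ → E} {h₂ : ℝ → F} {μ : ℕ → ℝ}
    (hconv₁ : ShiftsTendstoUniformlyOnCompacts h₁ μ)
    (hconv₂ : ShiftsTendstoUniformlyOnCompacts h₂ μ) :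
    ShiftsTendstoUniformlyOnCompacts (fun t ↦ WithLp.toLp 2 (h₁ t, h₂ t)) μ := by
  intro C hC ε hε
  obtain ⟨N₁, hN₁⟩ := hconv₁ C hC (ε / 2) (by positivity)
  obtain ⟨N₂, hN₂⟩ := hconv₂ C hC (ε / 2) (by positivity)
  refine ⟨max N₁ N₂, fun n hn t ht ↦ ?_⟩
  calc _ ≤ ‖h₁ (t + μ n) - h₁ t‖ + ‖h₂ (t + μ n) - h₂ t‖ :=
        WithLp.prod_norm_le_norm_fst_add_norm_snd _
    _ < ε / 2 + ε / 2 :=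
        add_lt_add (hN₁ n (le_of_max_le_left hn) t ht) (hN₂ n (le_of_max_le_right hn) t ht)
    _ = ε := add_halves ε

end Pair

theorem pair_unpredictable_general (p q : ℕ)
    (h₁ : ℝ → EuclideanSpace ℝ (Fin p)) (h₂ : ℝ → EuclideanSpace ℝ (Fin q))
    (huc₁ : UniformContinuous h₁) (huc₂ : UniformContinuous h₂)
    (μ θ : ℕ → ℝ) (hμ : Tendsto μ atTop atTop) (hθ : Tendsto θ atTop atTop)
    (hconv₁ : ∀ C : Set ℝ, IsCompact C → ∀ ε > 0, ∃ N, ∀ n ≥ N, ∀ t ∈ C,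
      ‖h₁ (t + μ n) - h₁ t‖ < ε)
    (hconv₂ : ∀ C : Set ℝ, IsCompact C → ∀ ε > 0, ∃ N, ∀ n ≥ N, ∀ t ∈ C,
      ‖h₂ (t + μ n) - h₂ t‖ < ε)
    (ε₀ ε₁ r₁ : ℝ) (hε₀ : 0 < ε₀) (hε₁ : 0 < ε₁) (hr₁ : 0 < r₁)
    (hsep₁ : ∀ n, ∀ t ∈ Icc (θ n - r₁) (θ n + r₁), ε₀ ≤ ‖h₁ (t + μ n) - h₁ t‖)
    (hsep₂ : ∀ n, ∀ t ∈ Icc (θ n - r₁) (θ n + r₁), ε₁ ≤ ‖h₂ (t + μ n) - h₂ t‖)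
    (h : ℝ → WithLp 2 (EuclideanSpace ℝ (Fin p) × EuclideanSpace ℝ (Fin q)))
    (hh : ∀ t, h t = (WithLp.equiv 2 _).symm (h₁ t, h₂ t)) :
    Unpredictable h ∧
    (∀ n, ∀ t ∈ Icc (θ n - r₁) (θ n + r₁),
      Real.sqrt (ε₀ ^ 2 + ε₁ ^ 2) ≤ ‖h (t + μ n) - h t‖) := by
  obtain rfl : h = fun t ↦ WithLp.toLp 2 (h₁ t, h₂ t) := funext hh
  have hsep : ∀ n, ∀ t ∈ Icc (θ n - r₁) (θ n + r₁),
      √(ε₀ ^ 2 + ε₁ ^ 2) ≤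
        ‖WithLp.toLp 2 (h₁ (t + μ n), h₂ (t + μ n)) - WithLp.toLp 2 (h₁ t, h₂ t)‖ :=
    fun n t ht ↦ WithLp.sqrt_sq_add_sq_le_prod_norm_toLp_sub_toLp hε₀.le hε₁.le
      (hsep₁ n t ht) (hsep₂ n t ht)
  have huc : UniformContinuous fun t ↦ WithLp.toLp 2 (h₁ t, h₂ t) :=
    (WithLp.prod_uniformContinuous_toLp 2 _ _).comp (huc₁.prodMk huc₂)
  exact ⟨⟨huc, _, by positivity, r₁, hr₁, μ, θ, hμ, hθ,
    ShiftsTendstoUniformlyOnCompacts.prod hconv₁ hconv₂, hsep⟩, hsep⟩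

theorem pair_unpredictable (p q : ℕ)
    (h₁ : ℝ → EuclideanSpace ℝ (Fin p)) (h₂ : ℝ → EuclideanSpace ℝ (Fin q))
    (Λ₁ : Set (EuclideanSpace ℝ (Fin p))) (Λ₂ : Set (EuclideanSpace ℝ (Fin q)))
    (hΛ₁ : IsCompact Λ₁) (hΛ₂ : IsCompact Λ₂)
    (hmem₁ : ∀ t, h₁ t ∈ Λ₁) (hmem₂ : ∀ t, h₂ t ∈ Λ₂)
    (huc₁ : UniformContinuous h₁) (huc₂ : UniformContinuous h₂)
    (μ θ : ℕ → ℝ) (hμ : Tendsto μ atTop atTop) (hθ : Tendsto θ atTop atTop)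
    (hconv₁ : ∀ C : Set ℝ, IsCompact C → ∀ ε > 0, ∃ N, ∀ n ≥ N, ∀ t ∈ C,
      ‖h₁ (t + μ n) - h₁ t‖ < ε)
    (hconv₂ : ∀ C : Set ℝ, IsCompact C → ∀ ε > 0, ∃ N, ∀ n ≥ N, ∀ t ∈ C,
      ‖h₂ (t + μ n) - h₂ t‖ < ε)
    (ε₀ ε₁ r₁ : ℝ) (hε₀ : 0 < ε₀) (hε₁ : 0 < ε₁) (hr₁ : 0 < r₁)
    (hsep₁ : ∀ n, ∀ t ∈ Icc (θ n - r₁) (θ n + r₁), ε₀ ≤ ‖h₁ (t + μ n) - h₁ t‖)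
    (hsep₂ : ∀ n, ∀ t ∈ Icc (θ n - r₁) (θ n + r₁), ε₁ ≤ ‖h₂ (t + μ n) - h₂ t‖)
    (h : ℝ → WithLp 2 (EuclideanSpace ℝ (Fin p) × EuclideanSpace ℝ (Fin q)))
    (hh : ∀ t, h t = (WithLp.equiv 2 _).symm (h₁ t, h₂ t)) :
    Unpredictable h ∧
    (∀ n, ∀ t ∈ Icc (θ n - r₁) (θ n + r₁),
      Real.sqrt (ε₀ ^ 2 + ε₁ ^ 2) ≤ ‖h (t + μ n) - h t‖) :=
  pair_unpredictable_general p q h₁ h₂ huc₁ huc₂ μ θ hμ hθ hconv₁ hconv₂ ε₀ ε₁ r₁ hε₀ hε₁ hr₁ hsep₁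
    hsep₂ h hh
end

section
/- Let G : ℝ^p × ℝ^q → ℝ^q be continuous on the compact set Λ_x × Λ_y and satisfy (A1) and (A2). Let x̃ : ℝ → Λ_x, ỹ : ℝ → Λ_y be continuous, with x̃ uniformly continuous and ỹ Lipschitz with constant M_G = sup_{Λ_x × Λ_y} ‖G‖. Then for every ε₀ > 0, there exists r₀ > 0 (independent of n) such that whenever ‖x̃(t+μ) − x̃(t)‖ ≥ ε₀ for all t in an interval [ω − r, ω + r] with r ≥ r₀, one has max over t ∈ [ω−r₀, ω+r₀] of ‖ỹ(t+μ) − ỹ(t)‖ ≥ L₁ r₀ ε₀ / (2√q (r₀ L₂ + 1)), where ỹ satisfies ỹ'(t) = G(x̃(t), ỹ(t)) for all t. -/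
/-!
Along the trajectory, `h t = ỹ (t + μ) - ỹ t` has derivative
`h' t = G (x̃ (t + μ), ỹ (t + μ)) - G (x̃ t, ỹ t)`, and (A1), (A2) give
`‖h' ω‖ ≥ L₁ ε₀ - L₂ ‖h ω‖`. Uniform continuity of `G` on the compact `Λx ×ˢ Λy` and of `(x̃, ỹ)`
yields an `r₀`, independent of `μ` and `ω`, such that `h'` moves by at most `L₁ ε₀ / 2` on
`[ω - r₀, ω + r₀]`. If `‖h‖ < c` on that interval, the mean value inequality gives
`2 r₀ (L₁ ε₀ - L₂ c - L₁ ε₀ / 2) < 2 c`, which fails for `c = L₁ r₀ ε₀ / (2 (r₀ L₂ + 1))`;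
the factor `√q` in the statement only weakens this bound.
-/

open Set

section MeanValue

variable {E : Type*} [NormedAddCommGroup E] [NormedSpace ℝ E]

theorem norm_sub_sub_smul_le_of_norm_deriv_sub_le {f f' : ℝ → E} {v : E} {a b η : ℝ}
    (hab : a ≤ b) (hf : ∀ t ∈ Icc a b, HasDerivAt f (f' t) t)
    (hbound : ∀ t ∈ Icc a b, ‖f' t - v‖ ≤ η) :
    ‖f b - f a - (b - a) • v‖ ≤ η * (b - a) := by
  have hg : ∀ t ∈ Icc a b, HasDerivWithinAt (fun t ↦ f t - t • v) (f' t - v) (Icc a b) t :=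
    fun t ht ↦ by
      have := ((hf t ht).fun_sub ((hasDerivAt_id t).smul_const v)).hasDerivWithinAt (s := Icc a b)
      rwa [one_smul] at this
  have := (convex_Icc a b).norm_image_sub_le_of_norm_hasDerivWithin_le hg hbound
    (left_mem_Icc.2 hab) (right_mem_Icc.2 hab)
  rw [Real.norm_of_nonneg (sub_nonneg.2 hab)] at this
  convert this using 2
  rw [sub_smul]
  abel

theorem exists_mem_Icc_le_norm_of_hasDerivAt {h h' : ℝ → E} {ω r a b η : ℝ}
    (hr : 0 < r) (hb : 0 ≤ b)
    (hder : ∀ t ∈ Icc (ω - r) (ω + r), HasDerivAt h (h' t) t)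
    (hvar : ∀ t ∈ Icc (ω - r) (ω + r), ‖h' t - h' ω‖ ≤ η)
    (hcentre : a - b * ‖h ω‖ ≤ ‖h' ω‖) :
    ∃ t ∈ Icc (ω - r) (ω + r), r * (a - η) / (r * b + 1) ≤ ‖h t‖ := by
  set c := r * (a - η) / (r * b + 1)
  have hc : c * (r * b + 1) = r * (a - η) := div_mul_cancel₀ _ (by positivity)
  by_contra! hsmall
  have hω := hsmall ω ⟨by linarith, by linarith⟩
  have hleft := hsmall (ω - r) ⟨le_rfl, by linarith⟩
  have hright := hsmall (ω + r) ⟨by linarith, le_rfl⟩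
  have hmv := norm_sub_sub_smul_le_of_norm_deriv_sub_le (by linarith) hder hvar
  have hlen : ω + r - (ω - r) = 2 * r := by ring
  rw [hlen] at hmv
  have hslope : 2 * r * ‖h' ω‖ ≤ ‖h (ω + r)‖ + ‖h (ω - r)‖ + η * (2 * r) :=
    calc 2 * r * ‖h' ω‖ = ‖(2 * r) • h' ω‖ := by
          rw [norm_smul, Real.norm_of_nonneg (by positivity)]
      _ ≤ ‖h (ω + r) - h (ω - r)‖ + ‖h (ω + r) - h (ω - r) - (2 * r) • h' ω‖ := by
          rw [norm_sub_rev (h (ω + r) - h (ω - r))]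
          exact norm_le_insert' _ _
      _ ≤ ‖h (ω + r)‖ + ‖h (ω - r)‖ + η * (2 * r) := by
          gcongr
          exact norm_sub_le _ _
  have hcentre' := mul_le_mul_of_nonneg_left hcentre (by positivity : 0 ≤ 2 * r)
  have hhω : r * b * ‖h ω‖ ≤ r * b * c := by gcongr
  linarith

end MeanValue

theorem UniformContinuous.exists_norm_shift_sub_sub_le {α E : Type*} [SeminormedAddCommGroup α]
    [SeminormedAddCommGroup E] {F : α → E} (hF : UniformContinuous F) {η : ℝ} (hη : 0 < η) :
    ∃ δ > 0, ∀ μ s t, dist s t < δ → ‖(F (s + μ) - F s) - (F (t + μ) - F t)‖ ≤ η := by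
  obtain ⟨δ, hδ, hFδ⟩ := Metric.uniformContinuous_iff.mp hF (η / 2) (half_pos hη)
  refine ⟨δ, hδ, fun μ s t hst ↦ ?_⟩
  have hshift := hFδ (by rwa [dist_add_right] : dist (s + μ) (t + μ) < δ)
  have hbase := hFδ hst
  rw [dist_eq_norm] at hshift hbase
  calc ‖(F (s + μ) - F s) - (F (t + μ) - F t)‖
      = ‖(F (s + μ) - F (t + μ)) - (F s - F t)‖ := by congr 1; abel
    _ ≤ ‖F (s + μ) - F (t + μ)‖ + ‖F s - F t‖ := norm_sub_le _ _
    _ ≤ η := by linarith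

theorem sub_le_norm_sub_of_expanding_left_of_lipschitz_right {E F H : Type*}
    [SeminormedAddCommGroup E] [SeminormedAddCommGroup F] [SeminormedAddCommGroup H]
    {G : E × F → H} {s : Set E} {t : Set F} {L₁ L₂ : ℝ}
    (hA1 : ∀ x₁ ∈ s, ∀ x₂ ∈ s, ∀ y ∈ t, L₁ * ‖x₁ - x₂‖ ≤ ‖G (x₁, y) - G (x₂, y)‖)
    (hA2 : ∀ x ∈ s, ∀ y₁ ∈ t, ∀ y₂ ∈ t, ‖G (x, y₁) - G (x, y₂)‖ ≤ L₂ * ‖y₁ - y₂‖)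
    {x₁ x₂ : E} {y₁ y₂ : F} (hx₁ : x₁ ∈ s) (hx₂ : x₂ ∈ s) (hy₁ : y₁ ∈ t) (hy₂ : y₂ ∈ t) :
    L₁ * ‖x₁ - x₂‖ - L₂ * ‖y₁ - y₂‖ ≤ ‖G (x₁, y₁) - G (x₂, y₂)‖ := by
  have hx := hA1 x₁ hx₁ x₂ hx₂ y₂ hy₂
  have hy := hA2 x₁ hx₁ y₂ hy₂ y₁ hy₁
  have htri := norm_sub_le_norm_sub_add_norm_sub (G (x₁, y₂)) (G (x₁, y₁)) (G (x₂, y₂))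
  rw [norm_sub_rev y₂] at hy
  linarith

theorem div_sqrt_natCast_le_self {x : ℝ} (hx : 0 ≤ x) (n : ℕ) : x / Real.sqrt n ≤ x := by
  rcases Nat.eq_zero_or_pos n with rfl | hn
  · simpa using hx
  · exact div_le_self hx (Real.one_le_sqrt.mpr (by exact_mod_cast hn))

theorem key_quantitative_lower_bound_general (p q : ℕ)
    (G : EuclideanSpace ℝ (Fin p) × EuclideanSpace ℝ (Fin q) → EuclideanSpace ℝ (Fin q))
    (Λx : Set (EuclideanSpace ℝ (Fin p))) (Λy : Set (EuclideanSpace ℝ (Fin q)))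
    (hΛx : IsCompact Λx) (hΛy : IsCompact Λy)
    (hGcont : ContinuousOn G (Λx ×ˢ Λy))
    (L₁ L₂ : ℝ) (hL₁ : 0 < L₁) (hL₂ : 0 < L₂)
    (hA1 : ∀ x₁ ∈ Λx, ∀ x₂ ∈ Λx, ∀ y ∈ Λy,
      L₁ * ‖x₁ - x₂‖ ≤ ‖G (x₁, y) - G (x₂, y)‖)
    (hA2 : ∀ x ∈ Λx, ∀ y₁ ∈ Λy, ∀ y₂ ∈ Λy,
      ‖G (x, y₁) - G (x, y₂)‖ ≤ L₂ * ‖y₁ - y₂‖)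
    (M_G : ℝ)
    (xtil : ℝ → EuclideanSpace ℝ (Fin p)) (ytil : ℝ → EuclideanSpace ℝ (Fin q))
    (hxmem : ∀ t, xtil t ∈ Λx) (hymem : ∀ t, ytil t ∈ Λy)
    (hxuc : UniformContinuous xtil)
    (hylip : LipschitzWith M_G.toNNReal ytil)
    (hysol : ∀ t, HasDerivAt ytil (G (xtil t, ytil t)) t) :
    ∀ ε₀ > (0 : ℝ), ∃ r₀ > (0 : ℝ), ∀ μ ≥ (0 : ℝ), ∀ ω r : ℝ, r₀ ≤ r →
      (∀ t ∈ Icc (ω - r) (ω + r), ε₀ ≤ ‖xtil (t + μ) - xtil t‖) →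
      ∃ t ∈ Icc (ω - r₀) (ω + r₀),
        L₁ * r₀ * ε₀ / (2 * Real.sqrt q * (r₀ * L₂ + 1)) ≤ ‖ytil (t + μ) - ytil t‖ := by
  intro ε₀ hε₀
  set F := fun t ↦ G (xtil t, ytil t)
  have hF : UniformContinuous F := by
    rw [← uniformContinuousOn_univ]
    exact ((hΛx.prod hΛy).uniformContinuousOn_of_continuous hGcont).comp
      (hxuc.prodMk hylip.uniformContinuous).uniformContinuousOn
      (fun t _ ↦ mk_mem_prod (hxmem t) (hymem t))
  obtain ⟨δ, hδ, hFδ⟩ := hF.exists_norm_shift_sub_sub_le (half_pos (mul_pos hL₁ hε₀))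
  refine ⟨δ / 2, half_pos hδ, fun μ _ ω r hr hx ↦ ?_⟩
  have hder : ∀ t, HasDerivAt (fun t ↦ ytil (t + μ) - ytil t) (F (t + μ) - F t) t :=
    fun t ↦ ((hysol (t + μ)).comp_add_const t μ).sub (hysol t)
  have hvar : ∀ t ∈ Icc (ω - δ / 2) (ω + δ / 2),
      ‖(F (t + μ) - F t) - (F (ω + μ) - F ω)‖ ≤ L₁ * ε₀ / 2 := fun t ht ↦
    hFδ μ t ω (by rw [Real.dist_eq, abs_lt]; constructor <;> linarith [ht.1, ht.2])
  have hcentre : L₁ * ε₀ - L₂ * ‖ytil (ω + μ) - ytil ω‖ ≤ ‖F (ω + μ) - F ω‖ := by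
    have hG := sub_le_norm_sub_of_expanding_left_of_lipschitz_right hA1 hA2
      (hxmem (ω + μ)) (hxmem ω) (hymem (ω + μ)) (hymem ω)
    have hxω := mul_le_mul_of_nonneg_left (hx ω ⟨by linarith, by linarith⟩) hL₁.le
    linarith
  obtain ⟨t, ht, hbound⟩ :=
    exists_mem_Icc_le_norm_of_hasDerivAt (half_pos hδ) hL₂.le (fun t _ ↦ hder t) hvar hcentre
  rw [sub_half] at hbound
  refine ⟨t, ht, ?_⟩
  calc L₁ * (δ / 2) * ε₀ / (2 * Real.sqrt q * (δ / 2 * L₂ + 1))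
      = δ / 2 * (L₁ * ε₀ / 2) / (δ / 2 * L₂ + 1) / Real.sqrt q := by field_simp
    _ ≤ δ / 2 * (L₁ * ε₀ / 2) / (δ / 2 * L₂ + 1) := div_sqrt_natCast_le_self (by positivity) q
    _ ≤ ‖ytil (t + μ) - ytil t‖ := hbound

theorem key_quantitative_lower_bound (p q : ℕ)
    (G : EuclideanSpace ℝ (Fin p) × EuclideanSpace ℝ (Fin q) → EuclideanSpace ℝ (Fin q))
    (Λx : Set (EuclideanSpace ℝ (Fin p))) (Λy : Set (EuclideanSpace ℝ (Fin q)))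
    (hΛx : IsCompact Λx) (hΛy : IsCompact Λy)
    (hGcont : ContinuousOn G (Λx ×ˢ Λy))
    (L₁ L₂ : ℝ) (hL₁ : 0 < L₁) (hL₂ : 0 < L₂)
    (hA1 : ∀ x₁ ∈ Λx, ∀ x₂ ∈ Λx, ∀ y ∈ Λy,
      L₁ * ‖x₁ - x₂‖ ≤ ‖G (x₁, y) - G (x₂, y)‖)
    (hA2 : ∀ x ∈ Λx, ∀ y₁ ∈ Λy, ∀ y₂ ∈ Λy,
      ‖G (x, y₁) - G (x, y₂)‖ ≤ L₂ * ‖y₁ - y₂‖)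
    (M_G : ℝ) (hMG : 0 < M_G)
    (hGbd : ∀ x ∈ Λx, ∀ y ∈ Λy, ‖G (x, y)‖ ≤ M_G)
    (xtil : ℝ → EuclideanSpace ℝ (Fin p)) (ytil : ℝ → EuclideanSpace ℝ (Fin q))
    (hxmem : ∀ t, xtil t ∈ Λx) (hymem : ∀ t, ytil t ∈ Λy)
    (hxuc : UniformContinuous xtil)
    (hylip : LipschitzWith M_G.toNNReal ytil)
    (hysol : ∀ t, HasDerivAt ytil (G (xtil t, ytil t)) t) :
    ∀ ε₀ > (0 : ℝ), ∃ r₀ > (0 : ℝ), ∀ μ ≥ (0 : ℝ), ∀ ω r : ℝ, r₀ ≤ r →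
      (∀ t ∈ Icc (ω - r) (ω + r), ε₀ ≤ ‖xtil (t + μ) - xtil t‖) →
      ∃ t ∈ Icc (ω - r₀) (ω + r₀),
        L₁ * r₀ * ε₀ / (2 * Real.sqrt q * (r₀ * L₂ + 1)) ≤ ‖ytil (t + μ) - ytil t‖ :=
  key_quantitative_lower_bound_general p q G Λx Λy hΛx hΛy hGcont L₁ L₂ hL₁ hL₂ hA1 hA2 M_G xtil
    ytil hxmem hymem hxuc hylip hysol
end
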